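/- arXiv:2409.10920 — 7 statements merged into one kernel-verified Lean document; each statement's English description precedes it below -/
import Mathlib

section
/- With the convergents p_k/q_k of a continued fraction with digits (c_k)_{k≥1} and the periods W_k defined from the mechanical words, one has W_0 = 0 (the one-letter word 0), W_1 = 0^{c_1−1}1 (the word consisting of c_1 − 1 zeros followed by a single 1), and for every k ≥ 2: W_k = W_{k−2} · W_{k−1}^{c_k} if k is even, and W_k = W_{k−1}^{c_k} · W_{k−2} if k is odd, where juxtaposition denotes concatenation of words and W^c denotes c-fold concatenation. -/
/-- Numerators of the convergents of a continued fraction with digits `c 1, c 2, …`,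
with shifted index: `pConv c 0 = p₋₁ = 1`, `pConv c (k+1) = p_k`. -/
def pConv (c : ℕ → ℕ) : ℕ → ℤ
  | 0 => 1
  | 1 => 0
  | (k + 2) => (c (k + 1) : ℤ) * pConv c (k + 1) + pConv c k

/-- Denominators of the convergents, with shifted index: `qConv c 0 = q₋₁ = 0`,
`qConv c (k+1) = q_k`. -/
def qConv (c : ℕ → ℕ) : ℕ → ℤ
  | 0 => 0
  | 1 => 1
  | (k + 2) => (c (k + 1) : ℤ) * qConv c (k + 1) + qConv c k

/-- The period `W_k` of the mechanical word of slope `p_k / q_k`: the word of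
length `q_k` whose `i`-th letter is `⌊(i+1)·p_k/q_k⌋ - ⌊i·p_k/q_k⌋`. -/
def sturmWord (c : ℕ → ℕ) (k : ℕ) : List ℤ :=
  (List.range (qConv c (k + 1)).toNat).map fun i =>
    ⌊((i : ℚ) + 1) * (pConv c (k + 1) : ℚ) / (qConv c (k + 1) : ℚ)⌋ -
      ⌊(i : ℚ) * (pConv c (k + 1) : ℚ) / (qConv c (k + 1) : ℚ)⌋


/-!
The letters of the mechanical word of slope `p / q` are the first differences of
`n ↦ ⌊n p / q⌋`. For consecutive convergents with `p = c p' + p''` and `q = c q' + q''`, cut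
`[0, q)` into one block of length `q''` and `c` blocks of length `q'`, in the order dictated by the
sign of `p' q'' - p'' q'`. On a block starting at `s` and modelled on `p₀ / q₀`, the determinant
identity makes the gap `(s + j) p / q - (B + j p₀ / q₀)` equal to `N / (q q₀)` for an integer
`0 ≤ N < q`; a gap in `[0, 1 / q₀)` cannot move the floor of a fraction with denominator `q₀`, so
`⌊(s + j) p / q⌋ = B + ⌊j p₀ / q₀⌋` and the block reproduces the word of `p₀ / q₀`.
-/

open List

def diffWord (F : ℕ → ℤ) (n : ℕ) : List ℤ :=
  (range n).map fun i => F (i + 1) - F i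

theorem diffWord_add (F : ℕ → ℤ) (m n : ℕ) :
    diffWord F (m + n) = diffWord F m ++ diffWord (fun i => F (m + i)) n := by
  simp [diffWord, range_add, Function.comp_def, add_assoc]

theorem diffWord_congr_add_const {F G : ℕ → ℤ} {n : ℕ} (B : ℤ)
    (h : ∀ j ≤ n, F j = B + G j) : diffWord F n = diffWord G n := by
  refine map_congr_left fun i hi => ?_
  rw [mem_range] at hi
  rw [h (i + 1) hi, h i hi.le]
  ring

theorem diffWord_mul {F G : ℕ → ℤ} {t n : ℕ} (B : ℕ → ℤ)
    (h : ∀ m < t, ∀ j ≤ n, F (m * n + j) = B m + G j) :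
    diffWord F (t * n) = (replicate t (diffWord G n)).flatten := by
  induction t with
  | zero => simp [diffWord]
  | succ t ih =>
    rw [Nat.succ_mul, diffWord_add, ih fun m hm => h m (by omega), replicate_succ',
      flatten_append, flatten_singleton]
    exact congrArg _ (diffWord_congr_add_const (B t) (h t (by omega)))

def mechWord (p : ℤ) (q : ℕ) : List ℤ :=
  diffWord (fun n => ⌊(n : ℚ) * p / q⌋) q

theorem mechWord_one {q : ℕ} (hq : 0 < q) : mechWord 1 q = replicate (q - 1) 0 ++ [1] := by
  obtain ⟨m, rfl⟩ := Nat.exists_eq_add_one_of_ne_zero hq.ne'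
  have hfloor : ∀ j : ℕ, ⌊(j : ℚ) * (1 : ℤ) / (m + 1 : ℕ)⌋ = (j / (m + 1) : ℕ) := fun j => by
    rw [Int.cast_one, mul_one, Rat.floor_natCast_div_natCast, Int.natCast_div]
  rw [mechWord, diffWord_add, Nat.add_sub_cancel]
  congr 1
  · rw [diffWord_congr_add_const (G := fun _ => 0) 0 fun j hj => by
      rw [hfloor, Nat.div_eq_of_lt (by omega)]; rfl]
    simp [diffWord]
  · simp only [diffWord, range_one, map_cons, map_nil, zero_add, add_zero, hfloor,
      Nat.div_self hq, Nat.div_eq_of_lt m.lt_succ_self]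
    rfl

theorem Int.floor_eq_floor_div_of_le_of_lt {K : Type*} [Field K] [LinearOrder K]
    [IsStrictOrderedRing K] [FloorRing K] {x : K} (a : ℤ) {b : ℕ} (hb : 0 < b)
    (h₁ : a / b ≤ x) (h₂ : x < (a + 1) / b) : ⌊x⌋ = ⌊(a : K) / b⌋ := by
  have hb' : (0 : K) < b := by exact_mod_cast hb
  have ha : a < (⌊(a : K) / b⌋ + 1) * b := by
    have := Int.lt_floor_add_one ((a : K) / b)
    rw [div_lt_iff₀ hb'] at this
    exact_mod_cast this
  rw [Int.floor_eq_iff]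
  refine ⟨(Int.floor_le _).trans h₁, h₂.trans_le ?_⟩
  rw [div_le_iff₀ hb']
  exact_mod_cast Int.add_one_le_iff.mpr ha

theorem floor_mul_div_eq_add_floor {p p₀ : ℤ} {q q₀ n j : ℕ} (B N : ℤ) (hq₀ : 0 < q₀)
    (hN : n * p * q₀ - (B * q₀ + j * p₀) * q = N) (h₀ : 0 ≤ N) (h₁ : N < q) :
    ⌊(n : ℚ) * p / q⌋ = B + ⌊(j : ℚ) * p₀ / q₀⌋ := by
  have hq : (0 : ℚ) < q := by exact_mod_cast (h₀.trans_lt h₁)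
  have hq₀' : (0 : ℚ) < q₀ := by exact_mod_cast hq₀
  have hN' : (n * p * q₀ - (B * q₀ + j * p₀) * q : ℚ) = N := by exact_mod_cast hN
  have h₀' : (0 : ℚ) ≤ N := by exact_mod_cast h₀
  have h₁' : (N : ℚ) < q := by exact_mod_cast h₁
  have hsplit : (B : ℚ) + j * p₀ / q₀ = ((B * q₀ + j * p₀ : ℤ) : ℚ) / q₀ := by
    push_cast; field_simp
  rw [← Int.floor_intCast_add, hsplit]
  apply Int.floor_eq_floor_div_of_le_of_lt _ hq₀
  · rw [div_le_div_iff₀ hq₀' hq]; push_cast; linarith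
  · rw [div_lt_div_iff₀ hq hq₀']; push_cast; linarith

section ConvergentTriple

variable {c : ℕ} {p p' p'' : ℤ} {q q' q'' : ℕ}

theorem mechWord_eq_append_flatten (hp : p = c * p' + p'') (hq : q = c * q' + q'')
    (hdet : p' * q'' - p'' * q' = 1) (hq'' : 0 < q'') (hle : q'' ≤ q') :
    mechWord p q = mechWord p'' q'' ++ (replicate c (mechWord p' q')).flatten := by
  have hq' : 0 < q' := hq''.trans_le hle
  have hleZ : (q'' : ℤ) ≤ q' := by exact_mod_cast hle
  rw [mechWord, hq, add_comm, diffWord_add]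
  congr 1
  · refine diffWord_congr_add_const 0 fun j hj => ?_
    have hjZ : (j : ℤ) ≤ q'' := by exact_mod_cast hj
    refine floor_mul_div_eq_add_floor 0 (j * c) hq'' ?_ (by positivity) ?_
    · subst hp hq; push_cast; linear_combination (j * c : ℤ) * hdet
    · push_cast; nlinarith
  · refine diffWord_mul (fun m => p'' + m * p') fun m hm j hj => ?_
    have hjZ : (j : ℤ) ≤ q' := by exact_mod_cast hj
    have hmZ : (m : ℤ) + 1 ≤ c := by exact_mod_cast hm
    refine floor_mul_div_eq_add_floor _ ((c - m) * q' - j) hq' ?_ (by nlinarith) ?_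
    · subst hp hq; push_cast; linear_combination ((c - m) * q' - j : ℤ) * hdet
    · push_cast; nlinarith

theorem mechWord_eq_flatten_append (hp : p = c * p' + p'') (hq : q = c * q' + q'')
    (hdet : p' * q'' - p'' * q' = -1) (hq'' : 0 < q'') (hle : q'' ≤ q') :
    mechWord p q = (replicate c (mechWord p' q')).flatten ++ mechWord p'' q'' := by
  have hq' : 0 < q' := hq''.trans_le hle
  have hleZ : (q'' : ℤ) ≤ q' := by exact_mod_cast hle
  rw [mechWord, hq, diffWord_add]
  congr 1
  · refine diffWord_mul (fun m => m * p') fun m hm j hj => ?_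
    have hjZ : (j : ℤ) ≤ q' := by exact_mod_cast hj
    have hmZ : (m : ℤ) + 1 ≤ c := by exact_mod_cast hm
    refine floor_mul_div_eq_add_floor _ (m * q' + j) hq' ?_ (by positivity) ?_
    · subst hp hq; push_cast; linear_combination -(m * q' + j : ℤ) * hdet
    · push_cast; nlinarith
  · refine diffWord_congr_add_const (c * p') fun j hj => ?_
    have hjZ : (j : ℤ) ≤ q'' := by exact_mod_cast hj
    refine floor_mul_div_eq_add_floor _ (c * (q'' - j)) hq'' ?_ ?_ ?_
    · subst hp hq; push_cast; linear_combination (j * c - c * q'' : ℤ) * hdet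
    · have : (0 : ℤ) ≤ c := by positivity
      nlinarith
    · push_cast; nlinarith

end ConvergentTriple

theorem qConv_nonneg (c : ℕ → ℕ) : ∀ n, 0 ≤ qConv c n
  | 0 => le_rfl
  | 1 => zero_le_one
  | n + 2 => add_nonneg (mul_nonneg (Nat.cast_nonneg _) (qConv_nonneg c (n + 1))) (qConv_nonneg c n)

theorem qConv_le_qConv_succ {c : ℕ → ℕ} (hc : ∀ k, 1 ≤ k → 1 ≤ c k) :
    ∀ n, qConv c n ≤ qConv c (n + 1)
  | 0 => zero_le_one
  | n + 1 => by
    show qConv c (n + 1) ≤ c (n + 1) * qConv c (n + 1) + qConv c n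
    have hc' : (1 : ℤ) ≤ c (n + 1) := by exact_mod_cast hc _ n.succ_pos
    nlinarith [qConv_nonneg c n, qConv_nonneg c (n + 1)]

theorem qConv_pos {c : ℕ → ℕ} (hc : ∀ k, 1 ≤ k → 1 ≤ c k) (n : ℕ) : 0 < qConv c (n + 1) :=
  zero_lt_one.trans_le <| monotone_nat_of_le_succ (qConv_le_qConv_succ hc) (Nat.le_add_left 1 n)

theorem pConv_mul_qConv_sub_pConv_mul_qConv (c : ℕ → ℕ) :
    ∀ n, pConv c (n + 1) * qConv c n - pConv c n * qConv c (n + 1) = (-1) ^ (n + 1)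
  | 0 => by simp [pConv, qConv]
  | n + 1 => by
    have ih := pConv_mul_qConv_sub_pConv_mul_qConv c n
    show (c (n + 1) * pConv c (n + 1) + pConv c n) * qConv c (n + 1)
      - pConv c (n + 1) * (c (n + 1) * qConv c (n + 1) + qConv c n) = (-1) ^ (n + 2)
    linear_combination -ih

theorem sturmWord_eq_mechWord (c : ℕ → ℕ) (k : ℕ) :
    sturmWord c k = mechWord (pConv c (k + 1)) (qConv c (k + 1)).toNat := by
  have hq : (((qConv c (k + 1)).toNat : ℕ) : ℚ) = qConv c (k + 1) := by
    rw [← Int.cast_natCast, Int.toNat_of_nonneg (qConv_nonneg c _)]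
  unfold sturmWord mechWord diffWord
  simp only [bind_pure_comp, map_eq_map, map_map, Function.comp_def, hq, Nat.cast_succ]

/-- `W₀ = 0`, `W₁ = 0^{c₁-1}1`, and for `k ≥ 2`:
`W_k = W_{k-2} · W_{k-1}^{c_k}` if `k` is even, and `W_k = W_{k-1}^{c_k} · W_{k-2}`
if `k` is odd. -/
theorem sturmWord_recursion (c : ℕ → ℕ) (hc : ∀ k, 1 ≤ k → 1 ≤ c k) :
    sturmWord c 0 = [0] ∧
    sturmWord c 1 = List.replicate (c 1 - 1) 0 ++ [1] ∧
    ∀ k, 2 ≤ k →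
      (Even k → sturmWord c k =
        sturmWord c (k - 2) ++ (List.replicate (c k) (sturmWord c (k - 1))).flatten) ∧
      (¬ Even k → sturmWord c k =
        (List.replicate (c k) (sturmWord c (k - 1))).flatten ++ sturmWord c (k - 2)) := by
  refine ⟨?_, ?_, fun k hk => ?_⟩
  · simp [sturmWord_eq_mechWord, pConv, qConv, mechWord, diffWord]
  · rw [sturmWord_eq_mechWord]
    simpa [pConv, qConv] using mechWord_one (hc 1 le_rfl)
  obtain ⟨k, rfl⟩ := Nat.exists_eq_add_of_le' hk
  set Q : ℕ → ℕ := fun n => (qConv c n).toNat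
  have hQ (n : ℕ) : (Q n : ℤ) = qConv c n := Int.toNat_of_nonneg (qConv_nonneg c n)
  have hp : pConv c (k + 3) = c (k + 2) * pConv c (k + 2) + pConv c (k + 1) := rfl
  have hq : Q (k + 3) = c (k + 2) * Q (k + 2) + Q (k + 1) := by
    apply Nat.cast_injective (R := ℤ)
    push_cast [hQ]
    rfl
  have hdet : pConv c (k + 2) * Q (k + 1) - pConv c (k + 1) * Q (k + 2) = (-1) ^ (k + 2) := by
    rw [hQ, hQ]
    exact pConv_mul_qConv_sub_pConv_mul_qConv c (k + 1)
  have hpos : 0 < Q (k + 1) := Int.lt_toNat.mpr (qConv_pos hc k)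
  have hle : Q (k + 1) ≤ Q (k + 2) := Int.toNat_le_toNat (qConv_le_qConv_succ hc (k + 1))
  simp only [sturmWord_eq_mechWord, Nat.add_sub_cancel, show k + 2 - 1 = k + 1 from rfl]
  refine ⟨fun he => ?_, fun ho => ?_⟩
  · exact mechWord_eq_append_flatten hp hq (hdet.trans he.neg_one_pow) hpos hle
  · have hodd := Nat.not_even_iff_odd.mp ho
    exact mechWord_eq_flatten_append hp hq (hdet.trans hodd.neg_one_pow) hpos hle
end

section
/- Let B and C be 2×2 real matrices with det B = det C = 1, let m ≥ 1 be a natural number, let ℓ ∈ {−1, 0} and let ε ∈ {1, −1}. Then S_{m−1−ℓ}(tr B)·( tr(C·B^{m−1}) + ε·tr(C·B^{1+ℓ}) ) = ( S_{m−2−ℓ}(tr B) + ε )·( tr(C·B^m) + ε·tr(C·B^ℓ) ). -/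
/-! Extend `S_n` to all `n ∈ ℤ` by the recurrence (Mathlib's `Polynomial.Chebyshev.S`).
By Cayley–Hamilton `B² = (tr B) B - 1`, so `t n = tr (C Bⁿ)` satisfies the same recurrence and
hence `t (j + k) = S_{k-1} t (j + 1) - S_{k-2} t j`. Substituting this, both sides of the identity
become linear in `t (j + 1)` and `t j`: the coefficients of `t (j + 1)` agree on the nose, those of
`t j` by Cassini's identity `S_k S_{k-2} = S_{k-1}² - 1` together with `ε² = 1`. -/

/-- Auxiliary: the dilated Chebyshev polynomials of the second kind with
nonnegative index, `chebAux n x = S_n(x)`. -/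
noncomputable def chebAux : ℕ → ℝ → ℝ
  | 0, _ => 1
  | 1, x => x
  | (n + 2), x => x * chebAux (n + 1) x - chebAux n x

/-- The dilated Chebyshev polynomials of the second kind `S_n`, indexed by `ℤ`,
with `S_{-1} = 0`, `S_0 = 1` and `S_n(x) = x·S_{n-1}(x) − S_{n-2}(x)` for `n ≥ 1`. -/
noncomputable def chebS (n : ℤ) (x : ℝ) : ℝ :=
  if 0 ≤ n then chebAux n.toNat x else 0

/-- The trace of an element of `SL(2,ℝ)`, viewed as a `2×2` real matrix. -/
noncomputable def trSL (A : Matrix.SpecialLinearGroup (Fin 2) ℝ) : ℝ :=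
  Matrix.trace (A : Matrix (Fin 2) (Fin 2) ℝ)

section

open Polynomial Polynomial.Chebyshev

theorem chebAux_eq_eval_S (k : ℕ) (x : ℝ) : chebAux k x = (S ℝ k).eval x := by
  induction k using Nat.twoStepInduction with
  | zero => simp [chebAux]
  | one => simp [chebAux]
  | more k ih₀ ih₁ =>
    rw [chebAux, ih₀, ih₁]
    push_cast
    simp [S_add_two]

-- `chebS` vanishes below `-1`, whereas `S (-n - 2) = -S n`.
theorem chebS_eq_eval_S {n : ℤ} (hn : -1 ≤ n) (x : ℝ) : chebS n x = (S ℝ n).eval x := by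
  obtain rfl | hn := hn.eq_or_lt
  · simp [chebS]
  · lift n to ℕ using by omega
    simp [chebS, chebAux_eq_eval_S]

theorem Polynomial.Chebyshev.S_mul_S_sub_two (R : Type*) [CommRing R] (n : ℤ) :
    S R n * S R (n - 2) = S R (n - 1) ^ 2 - 1 := by
  have hsq := S_sq_add_S_sq R (n - 1)
  rw [sub_add_cancel] at hsq
  linear_combination S R n * S_sub_two R n - hsq

variable {R : Type*} [CommRing R]

def IsChebyshevRec (x : R) (u : ℤ → R) : Prop :=
  ∀ n, u (n + 2) = x * u (n + 1) - u n

variable {x : R} {u : ℤ → R}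

theorem IsChebyshevRec.eq_eval_S (hu : IsChebyshevRec x u) (j k : ℤ) :
    u (j + k) = (S R (k - 1)).eval x * u (j + 1) - (S R (k - 2)).eval x * u j := by
  induction k using Polynomial.Chebyshev.induct with
  | zero => simp
  | one => simp
  | add_two n ih₁ ih₀ =>
    have hS₁ := congrArg (eval x) (S_add_one R n)
    have hS₀ := congrArg (eval x) (S_eq R n)
    simp only [eval_sub, eval_mul, eval_X] at hS₁ hS₀
    linear_combination (norm := ring_nf) hu (j + n) + x * ih₁ - ih₀ - u (j + 1) * hS₁ + u j * hS₀
  | neg_add_one n ih₀ ih₁ =>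
    have hS₁ := congrArg (eval x) (S_sub_one R (-n - 1))
    have hS₀ := congrArg (eval x) (S_sub_one R (-n - 2))
    simp only [eval_sub, eval_mul, eval_X] at hS₁ hS₀
    linear_combination (norm := ring_nf)
      hu (j - n - 1) + x * ih₀ - ih₁ - u (j + 1) * hS₁ + u j * hS₀

theorem IsChebyshevRec.eval_S_mul_add_eq_mul_add (hu : IsChebyshevRec x u) {ε : R}
    (hε : ε ^ 2 = 1) (j k : ℤ) :
    (S R k).eval x * (u (j + k) + ε * u (j + 1)) =
      ((S R (k - 1)).eval x + ε) * (u (j + (k + 1)) + ε * u j) := by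
  have hcassini := congrArg (eval x) (S_mul_S_sub_two R k)
  simp only [eval_mul, eval_sub, eval_pow, eval_one] at hcassini
  rw [hu.eq_eval_S j k, hu.eq_eval_S j (k + 1), add_sub_cancel_right,
    show k + 1 - 2 = k - 1 by ring]
  linear_combination -u j * (hcassini + hε)

end

theorem Matrix.sq_eq_trace_smul_sub_det_smul_one {R : Type*} [CommRing R]
    (A : Matrix (Fin 2) (Fin 2) R) : A ^ 2 = A.trace • A - A.det • 1 := by
  ext i j
  fin_cases i <;> fin_cases j <;>
    simp [sq, Matrix.mul_apply, Matrix.trace_fin_two, Matrix.det_fin_two] <;> ring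

theorem isChebyshevRec_trSL_mul_zpow (B C : Matrix.SpecialLinearGroup (Fin 2) ℝ) :
    IsChebyshevRec (trSL B) (fun n ↦ trSL (C * B ^ n)) := by
  intro n
  have hB := Matrix.sq_eq_trace_smul_sub_det_smul_one (B : Matrix (Fin 2) (Fin 2) ℝ)
  rw [B.det_coe, one_smul] at hB
  have hpow : B ^ (n + 2) = B ^ n * B ^ 2 := by rw [zpow_add, zpow_two, pow_two]
  simp only [trSL, hpow, zpow_add_one, Matrix.SpecialLinearGroup.coe_mul,
    Matrix.SpecialLinearGroup.coe_pow, hB, Matrix.mul_sub, Matrix.mul_smul, Matrix.mul_one,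
    Matrix.trace_sub, Matrix.trace_smul, smul_eq_mul]

/-- For `B, C` of determinant `1`, `m ≥ 1`, `ℓ ∈ {−1, 0}` and
`ε ∈ {1, −1}`:
`S_{m−1−ℓ}(tr B)·(tr(C·B^{m−1}) + ε·tr(C·B^{1+ℓ}))
  = (S_{m−2−ℓ}(tr B) + ε)·(tr(C·B^m) + ε·tr(C·B^ℓ))`. -/
theorem trace_chebyshev_identity (B C : Matrix.SpecialLinearGroup (Fin 2) ℝ)
    (m : ℕ) (hm : 1 ≤ m) (ℓ : ℤ) (hℓ : ℓ = -1 ∨ ℓ = 0) (ε : ℝ) (hε : ε = 1 ∨ ε = -1) :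
    chebS ((m : ℤ) - 1 - ℓ) (trSL B) *
        (trSL (C * B ^ ((m : ℤ) - 1)) + ε * trSL (C * B ^ (1 + ℓ))) =
      (chebS ((m : ℤ) - 2 - ℓ) (trSL B) + ε) *
        (trSL (C * B ^ (m : ℤ)) + ε * trSL (C * B ^ ℓ)) := by
  have hε₂ : ε ^ 2 = 1 := by rcases hε with rfl | rfl <;> norm_num
  have key := (isChebyshevRec_trSL_mul_zpow B C).eval_S_mul_add_eq_mul_add hε₂ ℓ (m - 1 - ℓ)
  rw [show ℓ + (m - 1 - ℓ) = m - 1 by ring, show ℓ + (m - 1 - ℓ + 1) = m by ring,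
    show (m : ℤ) - 1 - ℓ - 1 = m - 2 - ℓ by ring, add_comm ℓ 1] at key
  rwa [chebS_eq_eval_S (by omega), chebS_eq_eval_S (by omega)]
end

section
/- For all real numbers x, y, z with |x| ≤ 2, |y| ≤ 2 and |z| ≤ 2, one has x² + y² + z² − x·y·z ≤ 20. Consequently, for every real V with V > 4 there exist no reals x, y, z in [−2,2] satisfying x² + y² + z² − x·y·z = 4 + V². (This is the key computation showing that for coupling constant V > 4 the spectra of three consecutive periodic approximations of a Sturmian Hamiltonian have empty intersection.) -/
/-- For all reals `x, y, z` with `|x| ≤ 2`, `|y| ≤ 2`, `|z| ≤ 2`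
one has `x² + y² + z² − x·y·z ≤ 20`; consequently for every real `V > 4` there are
no `x, y, z ∈ [−2,2]` with `x² + y² + z² − x·y·z = 4 + V²`. -/
theorem fricke_vogt_bound :
    (∀ x y z : ℝ, |x| ≤ 2 → |y| ≤ 2 → |z| ≤ 2 →
      x ^ 2 + y ^ 2 + z ^ 2 - x * y * z ≤ 20) ∧
    (∀ V : ℝ, 4 < V → ¬ ∃ x y z : ℝ, x ∈ Set.Icc (-2 : ℝ) 2 ∧
      y ∈ Set.Icc (-2 : ℝ) 2 ∧ z ∈ Set.Icc (-2 : ℝ) 2 ∧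
      x ^ 2 + y ^ 2 + z ^ 2 - x * y * z = 4 + V ^ 2) := by
  have key : ∀ x y z : ℝ, |x| ≤ 2 → |y| ≤ 2 → |z| ≤ 2 →
      x ^ 2 + y ^ 2 + z ^ 2 - x * y * z ≤ 20 := by
    intro x y z hx hy hz
    rw [abs_le] at hx hy hz
    obtain ⟨hx1, hx2⟩ := hx
    obtain ⟨hy1, hy2⟩ := hy
    obtain ⟨hz1, hz2⟩ := hz
    nlinarith [mul_nonneg (mul_nonneg (by linarith : (0:ℝ) ≤ 2 + x) (by linarith : (0:ℝ) ≤ 2 + y)) (by linarith : (0:ℝ) ≤ 2 + z),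
      mul_nonneg (mul_nonneg (by linarith : (0:ℝ) ≤ 2 - x) (by linarith : (0:ℝ) ≤ 2 - y)) (by linarith : (0:ℝ) ≤ 2 + z),
      mul_nonneg (mul_nonneg (by linarith : (0:ℝ) ≤ 2 - x) (by linarith : (0:ℝ) ≤ 2 + y)) (by linarith : (0:ℝ) ≤ 2 - z),
      mul_nonneg (mul_nonneg (by linarith : (0:ℝ) ≤ 2 + x) (by linarith : (0:ℝ) ≤ 2 - y)) (by linarith : (0:ℝ) ≤ 2 - z),
      mul_nonneg (by linarith : (0:ℝ) ≤ 2 - x) (by linarith : (0:ℝ) ≤ 2 + x),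
      mul_nonneg (by linarith : (0:ℝ) ≤ 2 - y) (by linarith : (0:ℝ) ≤ 2 + y),
      mul_nonneg (by linarith : (0:ℝ) ≤ 2 - z) (by linarith : (0:ℝ) ≤ 2 + z)]
  refine ⟨key, fun V hV ⟨x, y, z, hx, hy, hz, heq⟩ => ?_⟩
  have := key x y z (abs_le.2 hx) (abs_le.2 hy) (abs_le.2 hz)
  nlinarith
end

section
/- Let V, E, θ ∈ ℝ, let p, q be coprime positive integers with q ≥ 3, and set v(n) := V·(⌊(n+1)·p/q⌋ − ⌊n·p/q⌋) for 0 ≤ n ≤ q−1. Let H(θ) be the q×q complex matrix with diagonal entries H(θ)_{n,n} = v(n), off-diagonal entries H(θ)_{n,n+1} = H(θ)_{n+1,n} = 1 for 0 ≤ n ≤ q−2, corner entries H(θ)_{0,q−1} = e^{−iθ} and H(θ)_{q−1,0} = e^{iθ}, and all other entries 0. Let A_n := [[E − v(n), −1],[1, 0]] and let M := A_{q−1}·A_{q−2}⋯A_1·A_0 be the transfer matrix. Then det(E·I_q − H(θ)) = tr(M) − 2·cos(θ). -/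
/-!
`E - H(θ)` is the Dirichlet Jacobi matrix `J` with diagonal `E - v n` and off-diagonal entries `-1`,
perturbed by the corner entries `-e^{∓iθ}`. Expanding the determinant multilinearly in the first and
last rows gives `det J - e^{-iθ} - e^{iθ} - det J'`, where `J'` is the interior block on the indices
`1, …, q - 2`: each single corner leaves a triangular minor with determinant `1`, and both corners
together leave `J'`. On the other side, the entries of the transfer matrix `A_{k-1} ⋯ A_0` obey the
same three-term recursion as the determinants of the Jacobi matrices, so `tr M = det J - det J'`.
-/

open Matrix

namespace PeriodicJacobi

variable {R : Type*} [CommRing R]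

theorem det_updateRow_add_smul_updateRow_add_smul {ι : Type*} [Fintype ι] [DecidableEq ι]
    (M : Matrix ι ι R) {i j : ι} (hij : i ≠ j) (s t : R) (u w : ι → R) :
    ((M.updateRow i (M i + s • u)).updateRow j (M j + t • w)).det =
      M.det + s * (M.updateRow i u).det + t * (M.updateRow j w).det +
        s * t * ((M.updateRow i u).updateRow j w).det := by
  have expand_i : ∀ N : Matrix ι ι R,
      (N.updateRow i (N i + s • u)).det = N.det + s * (N.updateRow i u).det :=
    fun N => by rw [det_updateRow_add, updateRow_eq_self, det_updateRow_smul]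
  have hj : M j = (M.updateRow i (M i + s • u)) j := (updateRow_ne hij.symm).symm
  have hi : M i = (M.updateRow j w) i := (updateRow_ne hij).symm
  rw [hj, det_updateRow_add, updateRow_eq_self, expand_i, det_updateRow_smul,
    updateRow_comm _ hij, hi, expand_i, updateRow_comm _ hij.symm]
  ring

def jacobiMatrix (a : ℕ → R) (n : ℕ) : Matrix (Fin n) (Fin n) R :=
  of fun i j => if (i : ℕ) = j then a i else if (i : ℕ) = j + 1 ∨ (j : ℕ) = i + 1 then -1 else 0

variable (a : ℕ → R)

lemma jacobiMatrix_apply_of_add_two_le {n : ℕ} {i j : Fin n}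
    (h : (i : ℕ) + 2 ≤ j ∨ (j : ℕ) + 2 ≤ i) : jacobiMatrix a n i j = 0 := by
  simp only [jacobiMatrix, of_apply]
  rw [if_neg (by omega), if_neg (by omega)]

lemma submatrix_castSucc_jacobiMatrix (n : ℕ) :
    (jacobiMatrix a (n + 1)).submatrix Fin.castSucc Fin.castSucc = jacobiMatrix a n := rfl

lemma det_jacobiMatrix_zero : (jacobiMatrix a 0).det = 1 := det_isEmpty

lemma det_jacobiMatrix_one : (jacobiMatrix a 1).det = a 0 := by
  simp [jacobiMatrix]

theorem det_jacobiMatrix_add_two (n : ℕ) :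
    (jacobiMatrix a (n + 2)).det =
      a (n + 1) * (jacobiMatrix a (n + 1)).det - (jacobiMatrix a n).det := by
  have minor : ((jacobiMatrix a (n + 2)).submatrix Fin.castSucc
      (Fin.last n).castSucc.succAbove).det = -(jacobiMatrix a n).det := by
    rw [det_succ_column _ (Fin.last n), Fin.sum_univ_castSucc,
      Finset.sum_eq_zero fun i _ => ?_]
    · have inner : ((jacobiMatrix a (n + 2)).submatrix Fin.castSucc
          (Fin.last n).castSucc.succAbove).submatrix Fin.castSucc Fin.castSucc =
            jacobiMatrix a n := by
        ext i j
        simp [jacobiMatrix, Fin.succAbove]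
      rw [Fin.succAbove_last, inner]
      simp [jacobiMatrix, Fin.succAbove]
    · rw [submatrix_apply, jacobiMatrix_apply_of_add_two_le a (by simp [Fin.succAbove]),
        mul_zero, zero_mul]
  rw [det_succ_row _ (Fin.last (n + 1)), Fin.sum_univ_castSucc, Fin.sum_univ_castSucc,
    Finset.sum_eq_zero fun j _ => ?_]
  · rw [Fin.succAbove_last, minor, submatrix_castSucc_jacobiMatrix]
    simp [jacobiMatrix]
    ring
  · rw [jacobiMatrix_apply_of_add_two_le a (by simp), mul_zero, zero_mul]

theorem det_jacobiMatrix_updateRow_zero (n : ℕ) :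
    ((jacobiMatrix a (n + 1)).updateRow 0 (Pi.single (Fin.last n) 1)).det = 1 := by
  have htri : ((jacobiMatrix a (n + 1)).submatrix Fin.succ Fin.castSucc).IsUpperTriangular :=
    fun i j (hji : j < i) => jacobiMatrix_apply_of_add_two_le a (by
      have := Fin.lt_def.mp hji; simp; omega)
  rw [← adjugate_apply, adjugate_fin_succ_eq_det_submatrix, Fin.succAbove_zero,
    Fin.succAbove_last, det_of_isUpperTriangular htri]
  simp [jacobiMatrix, ← pow_add]

theorem det_jacobiMatrix_updateRow_last (n : ℕ) :
    ((jacobiMatrix a (n + 1)).updateRow (Fin.last n) (Pi.single 0 1)).det = 1 := by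
  have htri : ((jacobiMatrix a (n + 1)).submatrix Fin.castSucc Fin.succ).IsLowerTriangular :=
    fun i j (hij : i < j) => jacobiMatrix_apply_of_add_two_le a (by
      have := Fin.lt_def.mp hij; simp; omega)
  rw [← adjugate_apply, adjugate_fin_succ_eq_det_submatrix, Fin.succAbove_zero,
    Fin.succAbove_last, det_of_isLowerTriangular _ htri]
  simp [jacobiMatrix, ← pow_add]

theorem det_jacobiMatrix_updateRow_zero_updateRow_last (n : ℕ) :
    (((jacobiMatrix a (n + 2)).updateRow 0 (Pi.single (Fin.last (n + 1)) 1)).updateRow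
      (Fin.last (n + 1)) (Pi.single 0 1)).det = -(jacobiMatrix (fun k => a (k + 1)) n).det := by
  have hrow : ((jacobiMatrix a (n + 2)).updateRow 0 (Pi.single (Fin.last (n + 1)) 1)).submatrix
      Fin.castSucc Fin.succ = ((jacobiMatrix a (n + 2)).submatrix Fin.castSucc Fin.succ).updateRow 0
        (Pi.single (Fin.last n) 1) := by
    ext i j
    rcases Fin.eq_zero_or_eq_succ i with rfl | ⟨i, rfl⟩
    · simp [Pi.single_apply, Fin.ext_iff]
    · simp [updateRow_ne]
  have hinterior : (jacobiMatrix a (n + 2)).submatrix (Fin.castSucc ∘ Fin.succ)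
      (Fin.succ ∘ Fin.castSucc) = jacobiMatrix (fun k => a (k + 1)) n := by
    ext i j
    simp [jacobiMatrix]
  rw [← adjugate_apply, adjugate_fin_succ_eq_det_submatrix, Fin.succAbove_zero,
    Fin.succAbove_last, hrow, ← adjugate_apply, adjugate_fin_succ_eq_det_submatrix,
    Fin.succAbove_zero, Fin.succAbove_last, submatrix_submatrix]
  simp only [hinterior, Fin.val_last, Fin.val_zero, add_zero, zero_add]
  rw [← mul_assoc, ← pow_add, Odd.neg_one_pow ⟨n, by ring⟩, neg_one_mul]

lemma map_det_jacobiMatrix {S : Type*} [CommRing S] (f : R →+* S) (n : ℕ) :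
    f (jacobiMatrix a n).det = (jacobiMatrix (fun k => f (a k)) n).det := by
  rw [RingHom.map_det]
  congr 1
  ext i j
  simp only [RingHom.mapMatrix_apply, map_apply, jacobiMatrix, of_apply]
  split_ifs <;> simp

def transferMatrix (n : ℕ) : Matrix (Fin 2) (Fin 2) R := !![a n, -1; 1, 0]

def transferProd (n : ℕ) : Matrix (Fin 2) (Fin 2) R :=
  ((List.range n).reverse.map (transferMatrix a)).prod

lemma transferProd_succ (n : ℕ) :
    transferProd a (n + 1) = transferMatrix a n * transferProd a n := by
  simp [transferProd, List.range_succ]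

theorem transferProd_add_two (n : ℕ) :
    transferProd a (n + 2) =
      !![(jacobiMatrix a (n + 2)).det, -(jacobiMatrix (fun k => a (k + 1)) (n + 1)).det;
        (jacobiMatrix a (n + 1)).det, -(jacobiMatrix (fun k => a (k + 1)) n).det] := by
  induction n with
  | zero =>
    rw [transferProd_succ, transferProd_succ, det_jacobiMatrix_add_two, det_jacobiMatrix_one,
      det_jacobiMatrix_one, det_jacobiMatrix_zero, det_jacobiMatrix_zero]
    ext i j
    fin_cases i <;> fin_cases j <;> simp [transferProd, transferMatrix, sub_eq_add_neg]
  | succ n ih =>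
    rw [transferProd_succ, ih, det_jacobiMatrix_add_two a (n + 1),
      det_jacobiMatrix_add_two (fun k => a (k + 1)) n]
    ext i j
    fin_cases i <;> fin_cases j <;> simp [transferMatrix] <;> ring

theorem trace_transferProd_add_two (n : ℕ) :
    (transferProd a (n + 2)).trace =
      (jacobiMatrix a (n + 2)).det - (jacobiMatrix (fun k => a (k + 1)) n).det := by
  rw [transferProd_add_two, trace_fin_two_of, sub_eq_add_neg]

theorem smul_one_sub_eq_updateRow_jacobiMatrix (n : ℕ) (E : R) (d : ℕ → R) (z w : R)
    (H : Matrix (Fin (n + 3)) (Fin (n + 3)) R)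
    (hH : ∀ i j : Fin (n + 3), H i j =
      if (i : ℕ) = (j : ℕ) then d i
      else if (j : ℕ) = (i : ℕ) + 1 then 1
      else if (i : ℕ) = (j : ℕ) + 1 then 1
      else if (i : ℕ) = 0 ∧ (j : ℕ) = n + 3 - 1 then z
      else if (i : ℕ) = n + 3 - 1 ∧ (j : ℕ) = 0 then w
      else 0) :
    E • 1 - H =
      ((jacobiMatrix (fun k => E - d k) (n + 3)).updateRow 0
        (jacobiMatrix (fun k => E - d k) (n + 3) 0 + (-z) • Pi.single (Fin.last _) 1)).updateRow
        (Fin.last _) (jacobiMatrix (fun k => E - d k) (n + 3) (Fin.last _) + (-w) • Pi.single 0 1) := by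
  ext i j
  rw [Matrix.sub_apply, hH]
  simp only [updateRow_apply, jacobiMatrix, of_apply, Matrix.smul_apply, one_apply, Pi.add_apply,
    Pi.smul_apply, Pi.single_apply, Fin.ext_iff, Fin.val_last, Fin.val_zero, smul_eq_mul]
  split_ifs <;> first | omega | ring1 | simp_all

end PeriodicJacobi

open PeriodicJacobi in
theorem charpoly_eq_discriminant_sub_two_cos_general
    (E θ : ℝ) (q : ℕ) (hq : 3 ≤ q)
    (v : ℕ → ℝ)
    (H : Matrix (Fin q) (Fin q) ℂ)
    (hH : ∀ i j : Fin q, H i j =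
      if (i : ℕ) = (j : ℕ) then (v i : ℂ)
      else if (j : ℕ) = (i : ℕ) + 1 then 1
      else if (i : ℕ) = (j : ℕ) + 1 then 1
      else if (i : ℕ) = 0 ∧ (j : ℕ) = q - 1 then Complex.exp (-((θ : ℂ) * Complex.I))
      else if (i : ℕ) = q - 1 ∧ (j : ℕ) = 0 then Complex.exp ((θ : ℂ) * Complex.I)
      else 0)
    (A : ℕ → Matrix (Fin 2) (Fin 2) ℝ)
    (hA : ∀ n : ℕ, A n = !![E - v n, -1; 1, 0])
    (M : Matrix (Fin 2) (Fin 2) ℝ)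
    (hM : M = ((List.range q).reverse.map A).prod) :
    Matrix.det ((E : ℂ) • (1 : Matrix (Fin q) (Fin q) ℂ) - H) =
      (M.trace : ℂ) - 2 * (Real.cos θ : ℂ) := by
  obtain ⟨n, rfl⟩ : ∃ n, q = n + 3 := ⟨q - 3, by omega⟩
  have htrace : M.trace = (jacobiMatrix (fun k => E - v k) (n + 3)).det -
      (jacobiMatrix (fun k => E - v (k + 1)) (n + 1)).det := by
    rw [hM, funext hA]
    exact trace_transferProd_add_two (fun k => E - v k) (n + 1)
  have hcast : ∀ (b : ℕ → ℝ) k,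
      ((jacobiMatrix b k).det : ℂ) = (jacobiMatrix (fun k => (b k : ℂ)) k).det :=
    fun b k => map_det_jacobiMatrix b Complex.ofRealHom k
  have h0 : (0 : Fin (n + 3)) ≠ Fin.last (n + 2) := Fin.last_pos.ne
  rw [smul_one_sub_eq_updateRow_jacobiMatrix n _ (fun k => (v k : ℂ)) _ _ H hH,
    det_updateRow_add_smul_updateRow_add_smul _ h0, det_jacobiMatrix_updateRow_zero,
    det_jacobiMatrix_updateRow_last, det_jacobiMatrix_updateRow_zero_updateRow_last (n := n + 1),
    htrace, Complex.ofReal_sub, hcast, hcast, Complex.ofReal_cos, Complex.two_cos]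
  have hexp : Complex.exp (-(θ * Complex.I)) * Complex.exp (θ * Complex.I) = 1 := by
    rw [← Complex.exp_add, neg_add_cancel, Complex.exp_zero]
  push_cast
  simp only [neg_mul]
  linear_combination (-(jacobiMatrix (fun k => (E : ℂ) - v (k + 1)) (n + 1)).det) * hexp

/-- Let `V, E, θ ∈ ℝ`, `p, q` coprime positive integers with
`q ≥ 3`, and let `v n = V·(⌊(n+1)p/q⌋ − ⌊np/q⌋)` be the `q`-periodic Sturmian
potential. Let `H θ` be the `q×q` Floquet–Bloch Hamiltonian with diagonal `v`,
off-diagonal entries `1`, corner entries `e^{∓iθ}`, and `0` elsewhere, and let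
`M = A_{q−1}⋯A_0` be the transfer matrix built from
`A n = [[E − v n, −1],[1,0]]`. Then `det(E·I_q − H θ) = tr M − 2cos θ`. -/
theorem charpoly_eq_discriminant_sub_two_cos
    (V E θ : ℝ) (p q : ℕ) (hp : 0 < p) (hq : 3 ≤ q) (hpq : Nat.Coprime p q)
    (v : ℕ → ℝ)
    (hv : ∀ n : ℕ, v n =
      V * ((⌊((n : ℝ) + 1) * p / q⌋ : ℤ) - (⌊(n : ℝ) * p / q⌋ : ℤ)))
    (H : Matrix (Fin q) (Fin q) ℂ)
    (hH : ∀ i j : Fin q, H i j =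
      if (i : ℕ) = (j : ℕ) then (v i : ℂ)
      else if (j : ℕ) = (i : ℕ) + 1 then 1
      else if (i : ℕ) = (j : ℕ) + 1 then 1
      else if (i : ℕ) = 0 ∧ (j : ℕ) = q - 1 then Complex.exp (-((θ : ℂ) * Complex.I))
      else if (i : ℕ) = q - 1 ∧ (j : ℕ) = 0 then Complex.exp ((θ : ℂ) * Complex.I)
      else 0)
    (A : ℕ → Matrix (Fin 2) (Fin 2) ℝ)
    (hA : ∀ n : ℕ, A n = !![E - v n, -1; 1, 0])
    (M : Matrix (Fin 2) (Fin 2) ℝ)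
    (hM : M = ((List.range q).reverse.map A).prod) :
    Matrix.det ((E : ℂ) • (1 : Matrix (Fin q) (Fin q) ℂ) - H) =
      (M.trace : ℂ) - 2 * (Real.cos θ : ℂ) :=
  charpoly_eq_discriminant_sub_two_cos_general E θ q hq v H hH A hA M hM
end

section
/- Let p, q, p', q' be positive integers satisfying p·q' − p'·q = 1 (so p'/q' < p/q, as for two consecutive continued fraction convergents p_{k−1}/q_{k−1} < p_k/q_k at odd k). Then for every integer i with 0 ≤ i ≤ q − 1, one has ⌊i·p'/q'⌋ = ⌊i·p/q⌋. -/
/-- Let `p, q, p', q'` be positive integers with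
`p·q' − p'·q = 1` (so `p'/q' < p/q`). Then `⌊i·p'/q'⌋ = ⌊i·p/q⌋` for every
integer `0 ≤ i ≤ q − 1`. -/
theorem period_prefix_odd (p q p' q' : ℤ)
    (hp : 0 < p) (hq : 0 < q) (hp' : 0 < p') (hq' : 0 < q')
    (h : p * q' - p' * q = 1) (i : ℤ) (hi0 : 0 ≤ i) (hi1 : i ≤ q - 1) :
    ⌊(i : ℚ) * (p' : ℚ) / (q' : ℚ)⌋ = ⌊(i : ℚ) * (p : ℚ) / (q : ℚ)⌋ := by
  have hq'nat : ((q'.toNat : ℕ) : ℤ) = q' := Int.toNat_of_nonneg hq'.le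
  have hqnat : ((q.toNat : ℕ) : ℤ) = q := Int.toNat_of_nonneg hq.le
  have e1 : (i : ℚ) * (p' : ℚ) / (q' : ℚ) = ((i * p' : ℤ) : ℚ) / ((q'.toNat : ℕ) : ℚ) := by
    have : ((q'.toNat : ℕ) : ℚ) = (q' : ℚ) := by exact_mod_cast hq'nat
    rw [this]; push_cast; ring
  have e2 : (i : ℚ) * (p : ℚ) / (q : ℚ) = ((i * p : ℤ) : ℚ) / ((q.toNat : ℕ) : ℚ) := by
    have : ((q.toNat : ℕ) : ℚ) = (q : ℚ) := by exact_mod_cast hqnat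
    rw [this]; push_cast; ring
  rw [e1, e2, Rat.floor_intCast_div_natCast, Rat.floor_intCast_div_natCast, hq'nat, hqnat]
  set d := i * p / q with hd
  have h1 : q * d + (i * p) % q = i * p := Int.mul_ediv_add_emod _ _
  have h2 : 0 ≤ (i * p) % q := Int.emod_nonneg _ hq.ne'
  have h3 : (i * p) % q < q := Int.emod_lt_of_pos _ hq
  have hdq : d * q ≤ i * p := by nlinarith
  have hup : i * p < (d + 1) * q := by nlinarith
  have lower : d ≤ i * p' / q' := by
    rw [Int.le_ediv_iff_mul_le hq']
    by_contra hc
    push_neg at hc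
    nlinarith
  have upper : i * p' / q' ≤ d := by
    have : i * p' / q' < d + 1 := by
      rw [Int.ediv_lt_iff_lt_mul hq']
      nlinarith
    omega
  omega
end

section
/- Let p, q be coprime positive integers with q ≥ 3, and let q' be an integer with 1 ≤ q' ≤ q − 1 such that q'·p ≡ −1 (mod q). Then for every integer i with 1 ≤ i ≤ q − 2, one has ⌊(i + q' + 1)·p/q⌋ − ⌊(i + q')·p/q⌋ = ⌊(i+1)·p/q⌋ − ⌊i·p/q⌋. (Equivalently, the letters of the q-periodic mechanical word of slope p/q at positions i and i + q' coincide for 1 ≤ i ≤ q − 2.) -/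
lemma floor_intCast_div_intCast (a b : ℤ) (hb : 0 < b) :
    ⌊(a : ℚ) / (b : ℚ)⌋ = a / b := by
  have h1 : (b : ℚ) = ((b.toNat : ℕ) : ℚ) := by
    exact_mod_cast (Int.toNat_of_nonneg hb.le).symm
  have h2 : a / b = a / ((b.toNat : ℕ) : ℤ) := by
    rw [Int.toNat_of_nonneg hb.le]
  rw [h1, h2, Rat.floor_intCast_div_natCast]

lemma sub_one_ediv (n q : ℤ) (hq : 0 < q) (h : ¬ q ∣ n) : (n - 1) / q = n / q := by
  have hr : n % q ≠ 0 := fun h' => h (Int.dvd_of_emod_eq_zero h')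
  have hr1 : 1 ≤ n % q := by
    have := Int.emod_nonneg n hq.ne'
    omega
  have hrq : n % q < q := Int.emod_lt_of_pos n hq
  have hn : n - 1 = (n % q - 1) + q * (n / q) := by
    have := Int.emod_add_mul_ediv n q
    omega
  rw [hn, Int.add_mul_ediv_left _ _ hq.ne', Int.ediv_eq_zero_of_lt (by omega) (by omega),
    zero_add]

/-- Let `p, q` be coprime positive integers with `q ≥ 3`, and
let `1 ≤ q' ≤ q − 1` satisfy `q'·p ≡ −1 (mod q)`. Then for every integer
`1 ≤ i ≤ q − 2`,
`⌊(i+q'+1)·p/q⌋ − ⌊(i+q')·p/q⌋ = ⌊(i+1)·p/q⌋ − ⌊i·p/q⌋`; i.e. the letters of the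
`q`-periodic mechanical word of slope `p/q` at positions `i` and `i + q'`
coincide. -/
theorem sub_period_shift (p q q' : ℤ) (hp : 0 < p) (hq : 3 ≤ q)
    (hpq : IsCoprime p q) (hq'1 : 1 ≤ q') (hq'2 : q' ≤ q - 1)
    (hmod : q' * p ≡ -1 [ZMOD q]) (i : ℤ) (hi1 : 1 ≤ i) (hi2 : i ≤ q - 2) :
    ⌊((i : ℚ) + (q' : ℚ) + 1) * (p : ℚ) / (q : ℚ)⌋ -
        ⌊((i : ℚ) + (q' : ℚ)) * (p : ℚ) / (q : ℚ)⌋ =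
      ⌊((i : ℚ) + 1) * (p : ℚ) / (q : ℚ)⌋ - ⌊(i : ℚ) * (p : ℚ) / (q : ℚ)⌋ := by
  have hq0 : 0 < q := by omega
  have hdvd : q ∣ q' * p + 1 := by
    obtain ⟨c, hc⟩ := Int.ModEq.dvd hmod
    exact ⟨-c, by linarith⟩
  obtain ⟨m, hm⟩ := hdvd
  -- non-divisibility facts
  have hnd : ∀ j : ℤ, 1 ≤ j → j ≤ q - 1 → ¬ q ∣ j * p := by
    intro j hj1 hj2 hd
    have hqj : q ∣ j := IsCoprime.dvd_of_dvd_mul_right hpq.symm hd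
    have := Int.le_of_dvd (by omega) hqj
    omega
  have hnd1 : ¬ q ∣ i * p := hnd i hi1 (by omega)
  have hnd2 : ¬ q ∣ (i + 1) * p := hnd (i + 1) (by omega) (by omega)
  -- rewrite floors as integer divisions
  have e1 : ((i : ℚ) + (q' : ℚ) + 1) * (p : ℚ) / (q : ℚ)
      = (((i + q' + 1) * p : ℤ) : ℚ) / (q : ℚ) := by push_cast; ring
  have e2 : ((i : ℚ) + (q' : ℚ)) * (p : ℚ) / (q : ℚ)
      = (((i + q') * p : ℤ) : ℚ) / (q : ℚ) := by push_cast; ring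
  have e3 : ((i : ℚ) + 1) * (p : ℚ) / (q : ℚ)
      = (((i + 1) * p : ℤ) : ℚ) / (q : ℚ) := by push_cast; ring
  have e4 : (i : ℚ) * (p : ℚ) / (q : ℚ) = ((i * p : ℤ) : ℚ) / (q : ℚ) := by
    push_cast; ring
  rw [e1, e2, e3, e4, floor_intCast_div_intCast _ _ hq0,
    floor_intCast_div_intCast _ _ hq0, floor_intCast_div_intCast _ _ hq0,
    floor_intCast_div_intCast _ _ hq0]
  have k1 : (i + q' + 1) * p = ((i + 1) * p - 1) + m * q := by
    have : q' * p = q * m - 1 := by omega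
    ring_nf
    nlinarith [this]
  have k2 : (i + q') * p = (i * p - 1) + m * q := by
    have : q' * p = q * m - 1 := by omega
    nlinarith [this]
  rw [k1, k2, Int.add_mul_ediv_right _ _ hq0.ne', Int.add_mul_ediv_right _ _ hq0.ne',
    sub_one_ediv _ _ hq0 hnd2, sub_one_ediv _ _ hq0 hnd1]
  ring
end

section
/- Let x be a real number with |x| ≥ 2 and let n be a natural number. Then: (i) 2·|S_n(x)| − |S_{n−1}(x)| ≥ 0; (ii) sgn(x)^n·S_n(x) = |S_n(x)| (i.e. S_n(x) has the sign of x^n); (iii) sgn(x)^n·( S_n(x) − (x/2)·S_{n−1}(x) ) ≥ 1; (iv) |S_n(x)| ≥ 1. Moreover, if |x| > 2 and n ≥ 1, then sgn(x)^n·( S_n(x) − (x/2)·S_{n−1}(x) ) > 1. -/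
lemma cheb_grow (y : ℝ) (hy : 2 ≤ y) : ∀ n : ℕ,
    1 ≤ chebAux n y ∧ chebAux n y ≤ chebAux (n + 1) y ∧
    1 ≤ chebAux (n + 1) y - y / 2 * chebAux n y ∧
    (2 < y → 1 < chebAux (n + 1) y - y / 2 * chebAux n y) := by
  intro n
  induction n with
  | zero =>
    simp only [chebAux]
    exact ⟨le_refl 1, by linarith, by linarith, fun h => by linarith⟩
  | succ n ih =>
    obtain ⟨h1, h2, h3, h4⟩ := ih
    have e : chebAux (n + 2) y = y * chebAux (n + 1) y - chebAux n y := rfl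
    have hne : (0:ℝ) ≤ y - 2 := by linarith
    have hp1 : (0:ℝ) ≤ (y - 2) * chebAux (n + 1) y :=
      mul_nonneg hne (by linarith)
    have hp2 : y / 2 * 1 ≤ y / 2 * (chebAux (n + 1) y - y / 2 * chebAux n y) :=
      mul_le_mul_of_nonneg_left h3 (by linarith)
    have hp3 : (0:ℝ) ≤ (y - 2) * (y + 2) * chebAux n y :=
      mul_nonneg (mul_nonneg hne (by linarith)) (by linarith)
    refine ⟨by linarith, by rw [e]; nlinarith, by rw [e]; nlinarith, fun hy2 => ?_⟩
    rw [e]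
    nlinarith

lemma sign_mul_pow (x : ℝ) (hx0 : x ≠ 0) :
    Real.sign x * x = |x| ∧ Real.sign x ^ 2 = 1 ∧ |Real.sign x| = 1 := by
  rcases lt_or_gt_of_ne hx0 with h | h
  · rw [Real.sign_of_neg h, abs_of_neg h]; norm_num
  · rw [Real.sign_of_pos h, abs_of_pos h]; norm_num

lemma b_eq (x : ℝ) (hx0 : x ≠ 0) :
    ∀ n : ℕ, Real.sign x ^ n * chebAux n x = chebAux n |x| := by
  obtain ⟨hsx, hs2, _⟩ := sign_mul_pow x hx0
  intro n
  induction n using Nat.twoStepInduction with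
  | zero => simp [chebAux]
  | one => simpa [chebAux] using hsx
  | more n ih1 ih2 =>
    have e : chebAux (n + 2) x = x * chebAux (n + 1) x - chebAux n x := rfl
    have e' : chebAux (n + 2) |x| = |x| * chebAux (n + 1) |x| - chebAux n |x| := rfl
    have key : Real.sign x ^ (n + 2) * (x * chebAux (n + 1) x - chebAux n x) =
        (Real.sign x * x) * (Real.sign x ^ (n + 1) * chebAux (n + 1) x) -
        Real.sign x ^ 2 * (Real.sign x ^ n * chebAux n x) := by ring
    rw [e, key, hsx, hs2, ih2, ih1, e', one_mul]

/-- Let `|x| ≥ 2` and `n : ℕ`. Then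
(i) `2|S_n(x)| − |S_{n−1}(x)| ≥ 0`;
(ii) `sgn(x)^n·S_n(x) = |S_n(x)|`;
(iii) `sgn(x)^n·(S_n(x) − (x/2)·S_{n−1}(x)) ≥ 1`;
(iv) `|S_n(x)| ≥ 1`;
and moreover if `|x| > 2` and `n ≥ 1`, then
`sgn(x)^n·(S_n(x) − (x/2)·S_{n−1}(x)) > 1`. -/
theorem chebS_estimates (x : ℝ) (hx : 2 ≤ |x|) (n : ℕ) :
    0 ≤ 2 * |chebS (n : ℤ) x| - |chebS ((n : ℤ) - 1) x| ∧
    Real.sign x ^ n * chebS (n : ℤ) x = |chebS (n : ℤ) x| ∧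
    1 ≤ Real.sign x ^ n * (chebS (n : ℤ) x - x / 2 * chebS ((n : ℤ) - 1) x) ∧
    1 ≤ |chebS (n : ℤ) x| ∧
    (2 < |x| → 1 ≤ n →
      1 < Real.sign x ^ n * (chebS (n : ℤ) x - x / 2 * chebS ((n : ℤ) - 1) x)) := by
  have hx0 : x ≠ 0 := by
    intro h; rw [h, abs_zero] at hx; linarith
  obtain ⟨hsx, hs2, hsa⟩ := sign_mul_pow x hx0
  have hb := b_eq x hx0
  have hg := cheb_grow |x| hx
  have habs : ∀ m : ℕ, |chebAux m x| = chebAux m |x| := by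
    intro m
    have h1 : (1:ℝ) ≤ chebAux m |x| := (hg m).1
    have e : |Real.sign x ^ m * chebAux m x| = |chebAux m x| := by
      rw [abs_mul, abs_pow, hsa, one_pow, one_mul]
    rw [← e, hb m, abs_of_nonneg (by linarith : (0:ℝ) ≤ chebAux m |x|)]
  have hS : ∀ m : ℕ, chebS (m : ℤ) x = chebAux m x := by
    intro m; simp [chebS]
  cases n with
  | zero =>
    have h0 : chebS ((0:ℕ) : ℤ) x = 1 := by simp [chebS, chebAux]
    have hm1 : chebS (((0:ℕ) : ℤ) - 1) x = 0 := by simp [chebS]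
    rw [h0, hm1]
    norm_num
  | succ m =>
    have hc : ((m + 1 : ℕ) : ℤ) - 1 = (m : ℤ) := by push_cast; ring
    rw [hc, hS (m + 1), hS m]
    have key : Real.sign x ^ (m + 1) * (chebAux (m + 1) x - x / 2 * chebAux m x) =
        chebAux (m + 1) |x| - |x| / 2 * chebAux m |x| := by
      have : Real.sign x ^ (m + 1) * (chebAux (m + 1) x - x / 2 * chebAux m x) =
          Real.sign x ^ (m + 1) * chebAux (m + 1) x -
          (Real.sign x * x) / 2 * (Real.sign x ^ m * chebAux m x) := by ring
      rw [this, hb (m + 1), hsx, hb m]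
    obtain ⟨h1, h2, h3, h4⟩ := hg m
    have h1' : (1:ℝ) ≤ chebAux (m + 1) |x| := by linarith
    refine ⟨?_, ?_, ?_, ?_, ?_⟩
    · rw [habs (m + 1), habs m]; linarith
    · rw [hb (m + 1), habs (m + 1)]
    · rw [key]; exact h3
    · rw [habs (m + 1)]; exact h1'
    · intro hgt _
      rw [key]; exact h4 hgt
end
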